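/- arXiv:1408.0549 — 2 statements merged into one kernel-verified Lean document; each statement's English description precedes it below -/
import Mathlib

section
/- Let Φ be a finite set of points in ℝ² \ {0} with marks h_x > 0, x* a point of minimal norm, a > 1, and T > 0. If h_{x*} l₂(x*) > T · Σ_{y∈Φ\{x*}} h_y l₂(y), then h_{x*} l₂(a·x*) ≥ T · Σ_{y∈Φ\{x*}} h_y l₂(a·y); i.e., dilating all points by a factor a > 1 can only preserve or improve the SIR threshold event under the dual-slope path loss. -/
/-!
Writing `β = α₁ - α₀ ≥ 0`, the dual-slope law factors as `l(r) = r^(-α₀) · min(1, Rc/r)^β`.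
The factor `r^(-α₀)` is scale-free, and `m(r) = min(1, Rc/r)` satisfies
`m(a s) m(r) ≤ m(a r) m(s)` for `r ≤ s`, `a ≥ 1`, so `l(a r) / l(r)` is nonincreasing in `r`:
dilation attenuates the nearest point least, and the SIR at `x*` can only grow.
-/

open Real
open scoped Classical

noncomputable def dualSlope (Rc α₀ α₁ r : ℝ) : ℝ :=
  if r ≤ Rc then r ^ (-α₀) else Rc ^ (α₁ - α₀) * r ^ (-α₁)

lemma dualSlope_pos {Rc α₀ α₁ r : ℝ} (hRc : 0 < Rc) (hr : 0 < r) :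
    0 < dualSlope Rc α₀ α₁ r := by
  unfold dualSlope; split <;> positivity

lemma dualSlope_eq_rpow_mul_min {Rc r : ℝ} (α₀ α₁ : ℝ) (hRc : 0 < Rc) (hr : 0 < r) :
    dualSlope Rc α₀ α₁ r = r ^ (-α₀) * min 1 (Rc / r) ^ (α₁ - α₀) := by
  unfold dualSlope
  split_ifs with hle
  · rw [min_eq_left ((one_le_div hr).2 hle), one_rpow, mul_one]
  · rw [min_eq_right ((div_le_one hr).2 (not_le.1 hle).le), div_rpow hRc.le hr.le,
      rpow_neg hr.le, rpow_neg hr.le, rpow_sub hr]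
    field_simp

lemma min_one_div_mul_le {c a r s : ℝ} (hc : 0 ≤ c) (ha : 1 ≤ a) (hr : 0 < r) (hrs : r ≤ s) :
    min 1 (c / (a * s)) * min 1 (c / r) ≤ min 1 (c / (a * r)) * min 1 (c / s) := by
  have hs : 0 < s := hr.trans_le hrs
  have hdiv : c / (a * s) * (c / r) = c / (a * r) * (c / s) := by
    field_simp
  have h1 : c / (a * s) ≤ c / s :=
    div_le_div_of_nonneg_left hc hs (le_mul_of_one_le_left hs.le ha)
  have h2 : c / (a * s) ≤ c / (a * r) := div_le_div_of_nonneg_left hc (by positivity) (by gcongr)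
  simp only [min_mul_of_nonneg _ _ (le_min zero_le_one (by positivity) : (0:ℝ) ≤ min 1 (c / r)),
    min_mul_of_nonneg _ _ (le_min zero_le_one (by positivity) : (0:ℝ) ≤ min 1 (c / s)),
    mul_min_of_nonneg _ _ (by positivity : (0:ℝ) ≤ c / (a * s)),
    mul_min_of_nonneg _ _ (by positivity : (0:ℝ) ≤ c / (a * r)), one_mul, mul_one, hdiv]
  refine le_min (le_min ?_ ?_) (le_min ?_ ?_)
  all_goals simp only [min_le_iff, le_refl, h1, h2, or_true, true_or]

lemma dualSlope_mul_le {Rc α₀ α₁ a r s : ℝ} (hRc : 0 < Rc) (hα : α₀ ≤ α₁) (ha : 1 ≤ a)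
    (hr : 0 < r) (hrs : r ≤ s) :
    dualSlope Rc α₀ α₁ (a * s) * dualSlope Rc α₀ α₁ r ≤
      dualSlope Rc α₀ α₁ (a * r) * dualSlope Rc α₀ α₁ s := by
  have hs : 0 < s := hr.trans_le hrs
  have ha0 : 0 < a := zero_lt_one.trans_le ha
  have hpow : (a * s) ^ (-α₀) * r ^ (-α₀) = (a * r) ^ (-α₀) * s ^ (-α₀) := by
    rw [← mul_rpow (by positivity) hr.le, ← mul_rpow (by positivity) hs.le, mul_right_comm]
  have hmin : (min 1 (Rc / (a * s)) * min 1 (Rc / r)) ^ (α₁ - α₀) ≤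
      (min 1 (Rc / (a * r)) * min 1 (Rc / s)) ^ (α₁ - α₀) :=
    rpow_le_rpow (by positivity) (min_one_div_mul_le hRc.le ha hr hrs) (sub_nonneg.2 hα)
  rw [mul_rpow (by positivity) (by positivity), mul_rpow (by positivity) (by positivity)] at hmin
  simp only [dualSlope_eq_rpow_mul_min α₀ α₁ hRc (by positivity : 0 < a * s),
    dualSlope_eq_rpow_mul_min α₀ α₁ hRc (by positivity : 0 < a * r),
    dualSlope_eq_rpow_mul_min α₀ α₁ hRc hr, dualSlope_eq_rpow_mul_min α₀ α₁ hRc hs]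
  calc _ = ((a * s) ^ (-α₀) * r ^ (-α₀)) *
        (min 1 (Rc / (a * s)) ^ (α₁ - α₀) * min 1 (Rc / r) ^ (α₁ - α₀)) := by ring
    _ ≤ ((a * r) ^ (-α₀) * s ^ (-α₀)) *
        (min 1 (Rc / (a * r)) ^ (α₁ - α₀) * min 1 (Rc / s) ^ (α₁ - α₀)) := by
      rw [hpow]; gcongr
    _ = _ := by ring

lemma sum_mul_dualSlope_smul_le {E : Type*} [NormedAddCommGroup E] [NormedSpace ℝ E]
    {Rc α₀ α₁ a : ℝ} (hRc : 0 < Rc) (hα : α₀ ≤ α₁) (ha : 1 ≤ a)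
    (S : Finset E) (h : E → ℝ) (hh : ∀ y ∈ S, 0 ≤ h y) {x : E} (hx : x ≠ 0)
    (hmin : ∀ y ∈ S, ‖x‖ ≤ ‖y‖) :
    (∑ y ∈ S, h y * dualSlope Rc α₀ α₁ ‖a • y‖) * dualSlope Rc α₀ α₁ ‖x‖ ≤
      dualSlope Rc α₀ α₁ ‖a • x‖ * ∑ y ∈ S, h y * dualSlope Rc α₀ α₁ ‖y‖ := by
  have hnorm (z : E) : ‖a • z‖ = a * ‖z‖ := by
    rw [norm_smul, Real.norm_of_nonneg (zero_le_one.trans ha)]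
  rw [Finset.sum_mul, Finset.mul_sum]
  refine Finset.sum_le_sum fun y hy => ?_
  have key := dualSlope_mul_le hRc hα ha (norm_pos_iff.2 hx) (hmin y hy)
  rw [hnorm, hnorm]
  linarith [mul_le_mul_of_nonneg_left key (hh y hy)]

theorem stmt_6_general (Rc α₀ α₁ T a : ℝ) (hRc : 0 < Rc) (hα : α₀ ≤ α₁)
    (hT : 0 < T) (ha : 1 < a)
    (Φ : Finset (EuclideanSpace ℝ (Fin 2))) (hΦ : ∀ y ∈ Φ, y ≠ 0)
    (h : EuclideanSpace ℝ (Fin 2) → ℝ) (hh : ∀ y ∈ Φ, 0 < h y)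
    (xs : EuclideanSpace ℝ (Fin 2)) (hxs : xs ∈ Φ) (hmin : ∀ y ∈ Φ, ‖xs‖ ≤ ‖y‖)
    (hSIR : h xs * dualSlope Rc α₀ α₁ ‖xs‖ >
      T * ∑ y ∈ Φ.erase xs, h y * dualSlope Rc α₀ α₁ ‖y‖) :
    h xs * dualSlope Rc α₀ α₁ ‖a • xs‖ ≥
      T * ∑ y ∈ Φ.erase xs, h y * dualSlope Rc α₀ α₁ ‖a • y‖ := by
  have hxs0 : xs ≠ 0 := hΦ xs hxs
  have hsum := sum_mul_dualSlope_smul_le hRc hα ha.le (Φ.erase xs) h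
    (fun y hy => (hh y (Finset.mem_of_mem_erase hy)).le) hxs0
    (fun y hy => hmin y (Finset.mem_of_mem_erase hy))
  have hd : 0 < dualSlope Rc α₀ α₁ ‖xs‖ := dualSlope_pos hRc (norm_pos_iff.2 hxs0)
  have hc : 0 ≤ dualSlope Rc α₀ α₁ ‖a • xs‖ :=
    (dualSlope_pos hRc (norm_pos_iff.2 (smul_ne_zero (by positivity) hxs0))).le
  refine le_of_mul_le_mul_right ?_ hd
  calc T * (∑ y ∈ Φ.erase xs, h y * dualSlope Rc α₀ α₁ ‖a • y‖) * dualSlope Rc α₀ α₁ ‖xs‖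
      ≤ T * (dualSlope Rc α₀ α₁ ‖a • xs‖ * ∑ y ∈ Φ.erase xs, h y * dualSlope Rc α₀ α₁ ‖y‖) := by
        rw [mul_assoc]; exact mul_le_mul_of_nonneg_left hsum hT.le
    _ = dualSlope Rc α₀ α₁ ‖a • xs‖ * (T * ∑ y ∈ Φ.erase xs, h y * dualSlope Rc α₀ α₁ ‖y‖) := by
        ring
    _ ≤ dualSlope Rc α₀ α₁ ‖a • xs‖ * (h xs * dualSlope Rc α₀ α₁ ‖xs‖) :=
        mul_le_mul_of_nonneg_left hSIR.le hc
    _ = h xs * dualSlope Rc α₀ α₁ ‖a • xs‖ * dualSlope Rc α₀ α₁ ‖xs‖ := by ring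

theorem stmt_6 (Rc α₀ α₁ T a : ℝ) (hRc : 0 < Rc) (hα₀ : 0 ≤ α₀) (hα : α₀ ≤ α₁)
    (hT : 0 < T) (ha : 1 < a)
    (Φ : Finset (EuclideanSpace ℝ (Fin 2))) (hΦ : ∀ y ∈ Φ, y ≠ 0)
    (h : EuclideanSpace ℝ (Fin 2) → ℝ) (hh : ∀ y ∈ Φ, 0 < h y)
    (xs : EuclideanSpace ℝ (Fin 2)) (hxs : xs ∈ Φ) (hmin : ∀ y ∈ Φ, ‖xs‖ ≤ ‖y‖)
    (hSIR : h xs * dualSlope Rc α₀ α₁ ‖xs‖ >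
      T * ∑ y ∈ Φ.erase xs, h y * dualSlope Rc α₀ α₁ ‖y‖) :
    h xs * dualSlope Rc α₀ α₁ ‖a • xs‖ ≥
      T * ∑ y ∈ Φ.erase xs, h y * dualSlope Rc α₀ α₁ ‖a • y‖ :=
  stmt_6_general Rc α₀ α₁ T a hRc hα hT ha Φ hΦ h hh xs hxs hmin hSIR
end

section
/- Let λ_n → ∞ be a sequence of positive reals, T > 0, R_c > 0, 0 ≤ α₀ < 2, and define f_n(x) = λ_n π R_c² exp(−λ_n π R_c² x (1 + ∫₁^{1/x} T/(T + t^{α₀/2}) dt)) for x ∈ (0,1). Then ∫₀¹ f_n(x) dx → 0 as n → ∞. -/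
/-!
Write `A = λ π R_c²` and `s(x) = x (1 + ∫₁^{1/x} T/(T + t^β))` with `β = α₀/2`, so the integrand is
`A e^{-A s(x)}`. Since `u e^{-u} ≤ e⁻¹`, it is bounded by `e⁻¹ / s(x)` uniformly in `A ≥ 0`, and it tends
to `0` pointwise as `A → ∞`. On `[1, y]` the kernel is at least `T/(T+1) · y^{-β}`, which gives
`s(x) ≥ T/(T+1) · x^β`; hence `e⁻¹/s` is dominated by a multiple of the integrable `x^{-β}` (here `β < 1`)
and dominated convergence applies.
-/

open Real MeasureTheory Filter Set intervalIntegral Topology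

theorem continuousOn_primitive_Ici {E : Type*} [NormedAddCommGroup E] [NormedSpace ℝ E]
    {g : ℝ → E} {a : ℝ} (hg : ContinuousOn g (Ici a)) :
    ContinuousOn (fun y => ∫ t in a..y, g t) (Ici a) := by
  intro y hy
  have hay : a ≤ y + 1 := by linarith [mem_Ici.1 hy]
  have hIcc : ContinuousOn (fun y => ∫ t in a..y, g t) (Icc a (y + 1)) := by
    rw [← uIcc_of_le hay]
    exact continuousOn_primitive_interval
      ((hg.mono (uIcc_of_le hay ▸ Icc_subset_Ici_self)).integrableOn_compact isCompact_uIcc)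
  refine (hIcc y ⟨hy, by linarith⟩).mono_of_mem_nhdsWithin ?_
  rw [← Ici_inter_Iic]
  exact inter_mem_nhdsWithin _ (Iic_mem_nhds (by linarith))

theorem mul_exp_neg_mul_le_exp_neg_one_div (A : ℝ) {s : ℝ} (hs : 0 < s) :
    A * exp (-(A * s)) ≤ exp (-1) / s := by
  rw [le_div_iff₀ hs]
  calc A * exp (-(A * s)) * s = A * s * exp (-(A * s)) := by ring
    _ ≤ exp (-1) := mul_exp_neg_le_exp_neg_one _

theorem tendsto_mul_exp_neg_mul_nhds_zero {ι : Type*} {l : Filter ι} {A : ι → ℝ}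
    (hA : Tendsto A l atTop) {s : ℝ} (hs : 0 < s) :
    Tendsto (fun i => A i * exp (-(A i * s))) l (𝓝 0) := by
  have h := ((tendsto_pow_mul_exp_neg_atTop_nhds_zero 1).comp (hA.atTop_mul_const hs)).div_const s
  rw [zero_div] at h
  refine h.congr fun i => ?_
  simp only [Function.comp_apply, pow_one]
  field_simp

theorem tendsto_intervalIntegral_mul_exp_neg_mul {ι : Type*} {l : Filter ι}
    [l.IsCountablyGenerated] {A : ι → ℝ} (hA : Tendsto A l atTop) {s : ℝ → ℝ}
    (hs : AEStronglyMeasurable s (volume.restrict (Ioc 0 1))) {c β : ℝ} (hc : 0 < c)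
    (hβ : β < 1) (hcs : ∀ x ∈ Ioc (0 : ℝ) 1, c * x ^ β ≤ s x) :
    Tendsto (fun i => ∫ x in (0 : ℝ)..1, A i * exp (-(A i * s x))) l (𝓝 0) := by
  have hs_pos : ∀ x ∈ Ioc (0 : ℝ) 1, 0 < s x := fun x hx =>
    (mul_pos hc (rpow_pos_of_pos hx.1 β)).trans_le (hcs x hx)
  have h := intervalIntegral.tendsto_integral_filter_of_dominated_convergence (l := l)
    (μ := volume) (F := fun i x => A i * exp (-(A i * s x))) (f := 0) (a := 0) (b := 1)
    (fun x => exp (-1) / c * x ^ (-β)) ?meas ?bound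
    ((intervalIntegrable_rpow' (by linarith)).const_mul _) ?lim
  · simpa using h
  case meas =>
    rw [uIoc_of_le zero_le_one]
    exact Eventually.of_forall fun i => by fun_prop
  case bound =>
    filter_upwards [hA.eventually_ge_atTop 0] with i hi
    refine Eventually.of_forall fun x hx => ?_
    rw [uIoc_of_le zero_le_one] at hx
    have hxβ : 0 < x ^ β := rpow_pos_of_pos hx.1 β
    rw [norm_of_nonneg (by positivity)]
    calc A i * exp (-(A i * s x)) ≤ exp (-1) / s x :=
          mul_exp_neg_mul_le_exp_neg_one_div _ (hs_pos x hx)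
      _ ≤ exp (-1) / (c * x ^ β) :=
          div_le_div_of_nonneg_left (exp_pos _).le (by positivity) (hcs x hx)
      _ = exp (-1) / c * x ^ (-β) := by rw [rpow_neg hx.1.le]; field_simp
  case lim =>
    refine Eventually.of_forall fun x hx => ?_
    rw [uIoc_of_le zero_le_one] at hx
    exact tendsto_mul_exp_neg_mul_nhds_zero hA (hs_pos x hx)

section Kernel

variable {T β : ℝ}

theorem continuousOn_div_add_rpow (hT : 0 < T) (hβ : 0 ≤ β) :
    ContinuousOn (fun t : ℝ => T / (T + t ^ β)) (Ici 0) :=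
  continuousOn_const.div (continuousOn_const.add (continuous_rpow_const hβ).continuousOn)
    fun _ ht => (add_pos_of_pos_of_nonneg hT (rpow_nonneg ht β)).ne'

theorem div_add_one_mul_rpow_neg_le (hT : 0 < T) (hβ : 0 ≤ β) {t y : ℝ} (ht : 1 ≤ t)
    (hty : t ≤ y) : T / (T + 1) * y ^ (-β) ≤ T / (T + t ^ β) := by
  have hy : 0 < y := by linarith
  have hty_pow : t ^ β ≤ y ^ β := rpow_le_rpow (by linarith) hty hβ
  have hy_pow : 1 ≤ y ^ β := one_le_rpow (by linarith) hβ
  rw [rpow_neg hy.le, ← div_eq_mul_inv, div_div]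
  exact div_le_div_of_nonneg_left hT.le (by positivity) (by nlinarith)

theorem div_add_one_mul_rpow_le_one_add_integral (hT : 0 < T) (hβ : 0 ≤ β) {y : ℝ}
    (hy : 1 ≤ y) :
    T / (T + 1) * y ^ (1 - β) ≤ 1 + ∫ t in (1 : ℝ)..y, T / (T + t ^ β) := by
  set c := T / (T + 1)
  have hy0 : 0 < y := by linarith
  have hc1 : c ≤ 1 := (div_le_one (by linarith)).2 (by linarith)
  have hyβ : y ^ (-β) ≤ 1 := rpow_le_one_of_one_le_of_nonpos hy (by linarith)
  have hint : (y - 1) * (c * y ^ (-β)) ≤ ∫ t in (1 : ℝ)..y, T / (T + t ^ β) := by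
    have h := integral_mono_on hy (intervalIntegrable_const (μ := volume))
      (((continuousOn_div_add_rpow hT hβ).mono ?_).intervalIntegrable)
      fun t ht => div_add_one_mul_rpow_neg_le hT hβ ht.1 ht.2
    · rwa [intervalIntegral.integral_const, smul_eq_mul] at h
    · rw [uIcc_of_le hy]
      exact fun t ht => zero_le_one.trans ht.1
  have hsplit : c * y ^ (1 - β) = c * y ^ (-β) + (y - 1) * (c * y ^ (-β)) := by
    rw [sub_eq_neg_add, rpow_add_one hy0.ne']
    ring
  rw [hsplit]
  gcongr
  calc c * y ^ (-β) ≤ 1 * 1 := mul_le_mul hc1 hyβ (by positivity) zero_le_one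
    _ = 1 := one_mul 1

theorem div_add_one_mul_rpow_le_mul_one_add_integral (hT : 0 < T) (hβ : 0 ≤ β) {x : ℝ}
    (hx : x ∈ Ioc (0 : ℝ) 1) :
    T / (T + 1) * x ^ β ≤ x * (1 + ∫ t in (1 : ℝ)..(1 / x), T / (T + t ^ β)) := by
  have h := div_add_one_mul_rpow_le_one_add_integral hT hβ
    ((one_le_div hx.1).2 hx.2)
  have hpow : x * (1 / x) ^ (1 - β) = x ^ β := by
    rw [one_div, inv_rpow hx.1.le, ← rpow_neg hx.1.le, neg_sub, rpow_sub_one hx.1.ne']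
    exact mul_div_cancel₀ _ hx.1.ne'
  calc T / (T + 1) * x ^ β = x * (T / (T + 1) * (1 / x) ^ (1 - β)) := by
        rw [← hpow]; ring
    _ ≤ _ := mul_le_mul_of_nonneg_left h hx.1.le

theorem continuousOn_mul_one_add_integral (hT : 0 < T) (hβ : 0 ≤ β) :
    ContinuousOn (fun x : ℝ => x * (1 + ∫ t in (1 : ℝ)..(1 / x), T / (T + t ^ β)))
      (Ioc 0 1) := by
  have hprim := continuousOn_primitive_Ici
    ((continuousOn_div_add_rpow hT hβ).mono (Ici_subset_Ici.2 zero_le_one))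
  have hinv : ContinuousOn (fun x : ℝ => 1 / x) (Ioc 0 1) :=
    continuousOn_const.div continuousOn_id fun x hx => hx.1.ne'
  refine continuousOn_id.mul (continuousOn_const.add (hprim.comp hinv ?_))
  exact fun x hx => (one_le_div hx.1).2 hx.2

end Kernel

theorem stmt_16_general (T Rc α₀ : ℝ) (hT : 0 < T) (hRc : 0 < Rc) (hα₀ : 0 ≤ α₀) (hα₀2 : α₀ < 2)
    (lam : ℕ → ℝ) (hlim : Tendsto lam atTop atTop) :
    Tendsto
      (fun n => ∫ x in (0:ℝ)..1,
        lam n * π * Rc ^ 2 *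
          Real.exp (-(lam n * π * Rc ^ 2 * x *
            (1 + ∫ t in (1:ℝ)..(1 / x), T / (T + t ^ (α₀ / 2))))))
      atTop (nhds 0) := by
  have hβ : 0 ≤ α₀ / 2 := by positivity
  have hA : Tendsto (fun n => lam n * π * Rc ^ 2) atTop atTop :=
    (hlim.atTop_mul_const pi_pos).atTop_mul_const (by positivity)
  have h := tendsto_intervalIntegral_mul_exp_neg_mul hA
    ((continuousOn_mul_one_add_integral hT hβ).aestronglyMeasurable measurableSet_Ioc)
    (by positivity : 0 < T / (T + 1)) (by linarith : α₀ / 2 < 1)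
    fun x hx => div_add_one_mul_rpow_le_mul_one_add_integral hT hβ hx
  simpa only [mul_assoc] using h

theorem stmt_16 (T Rc α₀ : ℝ) (hT : 0 < T) (hRc : 0 < Rc) (hα₀ : 0 ≤ α₀) (hα₀2 : α₀ < 2)
    (lam : ℕ → ℝ) (hpos : ∀ n, 0 < lam n) (hlim : Tendsto lam atTop atTop) :
    Tendsto
      (fun n => ∫ x in (0:ℝ)..1,
        lam n * π * Rc ^ 2 *
          Real.exp (-(lam n * π * Rc ^ 2 * x *
            (1 + ∫ t in (1:ℝ)..(1 / x), T / (T + t ^ (α₀ / 2))))))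
      atTop (nhds 0) :=
  stmt_16_general T Rc α₀ hT hRc hα₀ hα₀2 lam hlim
end
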